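/- Let 𝔉 be any finite set of acyclic rooted graphs. Then there is a (|P|, |P|+|𝔉|)-GNN A such that for all pointed graphs (G,v), run_A(G, emb_G)(v) = emb_G(v) ⊕ hom(𝔉,(G,v)). -/

import Mathlib

open Classical

/-! ### Graphs with `p` binary node features -/

/-- A finite undirected graph with node labels over `p` binary features. -/
structure LabGraph (p : ℕ) : Type 1 where
  V : Type
  fintypeV : Fintype V
  decEqV : DecidableEq V
  adj : V → V → Prop
  symm : ∀ {u v}, adj u v → adj v u
  irrefl : ∀ v, ¬ adj v v
  lab : V → Fin p → Prop

attribute [instance] LabGraph.fintypeV LabGraph.decEqV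

namespace LabGraph

variable {p : ℕ}

/-- The finset of neighbours of a node. -/
noncomputable def nbrFinset (G : LabGraph p) (v : G.V) : Finset G.V :=
  Finset.univ.filter (fun u => G.adj v u)

/-- Multi-hot label encoding. -/
noncomputable def embG (G : LabGraph p) (v : G.V) : Fin p → ℝ :=
  fun i => if G.lab v i then 1 else 0

/-- `G.within v r u` : node `u` is at distance at most `r` from `v`. -/
def within (G : LabGraph p) (v : G.V) : ℕ → G.V → Prop
  | 0 => fun u => u = v
  | (r+1) => fun u => G.within v r u ∨ ∃ w, G.within v r w ∧ G.adj w u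

theorem within_self (G : LabGraph p) (v : G.V) : ∀ r, G.within v r v
  | 0 => rfl
  | (r+1) => Or.inl (G.within_self v r)

/-- Induced subgraph on a set of nodes. -/
noncomputable def induce (G : LabGraph p) (S : Set G.V) : LabGraph p where
  V := {u // u ∈ S}
  fintypeV := Fintype.ofFinite _
  decEqV := inferInstance
  adj a b := G.adj a.1 b.1
  symm h := G.symm h
  irrefl a h := G.irrefl a.1 h
  lab a := G.lab a.1

/-- `G_v^r` : the induced subgraph on the radius-`r` neighbourhood of `v`. -/
noncomputable def ball (G : LabGraph p) (v : G.V) (r : ℕ) : LabGraph p :=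
  G.induce {u | G.within v r u}

/-- The centre of `G_v^r`, as a node of `G_v^r`. -/
noncomputable def ballCenter (G : LabGraph p) (v : G.V) (r : ℕ) : (G.ball v r).V :=
  ⟨v, G.within_self v r⟩

end LabGraph

/-! ### GNNs -/

/-- A single message-passing layer: aggregation over the multiset of neighbour
embeddings and combination of the node embedding (concatenated via `Fin.append`)
with the aggregated value. -/
structure GNNLayer (Din Dout : ℕ) : Type where
  agg : Multiset (Fin Din → ℝ) → (Fin Din → ℝ)
  com : (Fin (Din + Din) → ℝ) → (Fin Dout → ℝ)

/-- A `(D,D')`-GNN: a nonempty sequence of layers with matching dimensions. -/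
inductive GNN : ℕ → ℕ → Type
  | last {D D'} (l : GNNLayer D D') : GNN D D'
  | cons {D Dm D'} (l : GNNLayer D Dm) (rest : GNN Dm D') : GNN D D'

noncomputable def GNNLayer.apply {p Din Dout : ℕ} (l : GNNLayer Din Dout) (G : LabGraph p)
    (emb : G.V → Fin Din → ℝ) : G.V → Fin Dout → ℝ :=
  fun v => l.com (Fin.append (emb v) (l.agg ((G.nbrFinset v).val.map emb)))

/-- Running a GNN on an embedded graph. -/
noncomputable def GNN.run {p : ℕ} : {D D' : ℕ} → GNN D D' → (G : LabGraph p) →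
    (G.V → Fin D → ℝ) → (G.V → Fin D' → ℝ)
  | _, _, .last l, G, emb => l.apply G emb
  | _, _, .cons l rest, G, emb => rest.run G (l.apply G emb)

/-- The node classifier of a `(p,1)`-GNN (as a proposition: value `1` ↔ output `> 0`). -/
def GNN.clsP {p : ℕ} (A : GNN p 1) (G : LabGraph p) (v : G.V) : Prop :=
  0 < A.run G G.embG v 0

/-- The node classifier of a `(p,1)`-GNN, as a boolean value. -/
noncomputable def GNN.cls {p : ℕ} (A : GNN p 1) (G : LabGraph p) (v : G.V) : Bool :=
  if A.clsP G v then true else false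

/-! ### Hierarchical Ego GNNs -/

/-- A `(D,D')`-HE-GNN of nesting depth `d`. -/
inductive HEGNN : ℕ → ℕ → ℕ → Type
  | base {D D'} (A : GNN D D') : HEGNN 0 D D'
  | nest {d D D'' D'} (B : HEGNN d (D+1) D'') (C : GNN (D + D'') D') : HEGNN (d+1) D D'

noncomputable def HEGNN.run {p : ℕ} : {d D D' : ℕ} → HEGNN d D D' → (G : LabGraph p) →
    (G.V → Fin D → ℝ) → (G.V → Fin D' → ℝ)
  | _, _, _, .base A, G, emb => A.run G emb
  | _, _, _, .nest B C, G, emb =>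
      C.run G (fun v => Fin.append (emb v)
        (B.run G (fun u => Fin.append (emb u) (fun _ => if u = v then (1:ℝ) else 0)) v))

def HEGNN.clsP {p d : ℕ} (A : HEGNN d p 1) (G : LabGraph p) (v : G.V) : Prop :=
  0 < A.run G G.embG v 0

noncomputable def HEGNN.cls {p d : ℕ} (A : HEGNN d p 1) (G : LabGraph p) (v : G.V) : Bool :=
  if A.clsP G v then true else false

/-! ### Hierarchical Ego Subgraph GNNs -/

/-- A `(D,D')`-HES-GNN of depth `d`; each nesting step carries its own radius `r`. -/
inductive HESGNN : ℕ → ℕ → ℕ → Type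
  | base {D D'} (A : GNN D D') : HESGNN 0 D D'
  | nest {d D D'' D'} (r : ℕ) (B : HESGNN d (D+1) D'') (C : GNN (D + D'') D') :
      HESGNN (d+1) D D'

noncomputable def HESGNN.run {p : ℕ} : {d D D' : ℕ} → HESGNN d D D' → (G : LabGraph p) →
    (G.V → Fin D → ℝ) → (G.V → Fin D' → ℝ)
  | _, _, _, .base A, G, emb => A.run G emb
  | _, _, _, .nest r B C, G, emb =>
      C.run G (fun v => Fin.append (emb v)
        (B.run (G.ball v r)
          (fun u => Fin.append (emb u.1) (fun _ => if u.1 = v then (1:ℝ) else 0))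
          (G.ballCenter v r)))

/-- All subgraph restrictions in the HES-GNN use radius `r`. -/
def HESGNN.radIs : {d D D' : ℕ} → ℕ → HESGNN d D D' → Prop
  | _, _, _, _, .base _ => True
  | _, _, _, r, .nest r' B _ => r' = r ∧ B.radIs r

def HESGNN.clsP {p d : ℕ} (A : HESGNN d p 1) (G : LabGraph p) (v : G.V) : Prop :=
  0 < A.run G G.embG v 0

noncomputable def HESGNN.cls {p d : ℕ} (A : HESGNN d p 1) (G : LabGraph p) (v : G.V) : Bool :=
  if A.clsP G v then true else false
/-! ### Graded modal logic GML -/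

inductive GML (p : ℕ) : Type
  | prop (i : Fin p)
  | top
  | and (φ ψ : GML p)
  | not (φ : GML p)
  | dia (k : ℕ) (φ : GML p)

/-- Satisfaction of a GML formula at a node. -/
def GML.sat {p : ℕ} (G : LabGraph p) : GML p → G.V → Prop
  | .prop i, v => G.lab v i
  | .top, _ => True
  | .and φ ψ, v => φ.sat G v ∧ ψ.sat G v
  | .not φ, v => ¬ φ.sat G v
  | .dia k φ, v => k ≤ Nat.card {u : G.V // G.adj v u ∧ φ.sat G u}

/-! ### Graded hybrid logic GML(↓) -/

inductive GMLd (p : ℕ) : Type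
  | prop (i : Fin p)
  | var (x : ℕ)
  | top
  | and (φ ψ : GMLd p)
  | not (φ : GMLd p)
  | dia (k : ℕ) (φ : GMLd p)
  | bind (x : ℕ) (φ : GMLd p)

/-- Satisfaction of a GML(↓) formula at a node, relative to an assignment of
variables to (marked) nodes; `↓x.φ` marks the current node with `x`. -/
def GMLd.sat {p : ℕ} (G : LabGraph p) : GMLd p → (ℕ → Option G.V) → G.V → Prop
  | .prop i, _, v => G.lab v i
  | .var x, g, v => g x = some v
  | .top, _, _ => True
  | .and φ ψ, g, v => φ.sat G g v ∧ ψ.sat G g v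
  | .not φ, g, v => ¬ φ.sat G g v
  | .dia k φ, g, v => k ≤ Nat.card {u : G.V // G.adj v u ∧ φ.sat G g u}
  | .bind x φ, g, v => φ.sat G (Function.update g x (some v)) v

def GMLd.free {p : ℕ} : GMLd p → Set ℕ
  | .prop _ => ∅
  | .var x => {x}
  | .top => ∅
  | .and φ ψ => φ.free ∪ ψ.free
  | .not φ => φ.free
  | .dia _ φ => φ.free
  | .bind x φ => φ.free \ {x}

/-- A sentence has no free variables. -/
def GMLd.Sentence {p : ℕ} (φ : GMLd p) : Prop := φ.free = ∅

/-- The ↓-nesting-depth of a formula. -/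
def GMLd.bindDepth {p : ℕ} : GMLd p → ℕ
  | .prop _ => 0
  | .var _ => 0
  | .top => 0
  | .and φ ψ => max φ.bindDepth ψ.bindDepth
  | .not φ => φ.bindDepth
  | .dia _ φ => φ.bindDepth
  | .bind _ φ => φ.bindDepth + 1

/-- Satisfaction of a sentence (empty assignment). -/
def GMLd.satS {p : ℕ} (G : LabGraph p) (φ : GMLd p) (v : G.V) : Prop :=
  φ.sat G (fun _ => none) v

/-! ### Graded hybrid subgraph logic: the fragment GML(↓_W) -/

inductive GMLW (p : ℕ) : Type
  | prop (i : Fin p)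
  | var (x : ℕ)
  | top
  | and (φ ψ : GMLW p)
  | not (φ : GMLW p)
  | dia (k : ℕ) (φ : GMLW p)
  /-- `↓_{W^r} x. φ`, i.e. `↓x. W^r φ`. -/
  | bindW (x : ℕ) (r : ℕ) (φ : GMLW p)

/-- Restrict an assignment along passage to an induced subgraph: markings of
nodes outside the subgraph disappear. -/
noncomputable def restrictAssign {p : ℕ} {G : LabGraph p} (S : Set G.V)
    (g : ℕ → Option G.V) : ℕ → Option (G.induce S).V :=
  fun x => (g x).bind (fun w => if h : w ∈ S then some ⟨w, h⟩ else none)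

/-- Satisfaction for the fragment GML(↓_W): `↓x.W^r φ` marks the current node `v`
with `x` and evaluates `φ` in the subgraph `G_v^r`. -/
noncomputable def GMLW.sat {p : ℕ} : GMLW p → (G : LabGraph p) → (ℕ → Option G.V) → G.V → Prop
  | .prop i, G, _, v => G.lab v i
  | .var x, _, g, v => g x = some v
  | .top, _, _, _ => True
  | .and φ ψ, G, g, v => φ.sat G g v ∧ ψ.sat G g v
  | .not φ, G, g, v => ¬ φ.sat G g v
  | .dia k φ, G, g, v => k ≤ Nat.card {u : G.V // G.adj v u ∧ φ.sat G g u}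
  | .bindW x r φ, G, g, v =>
      φ.sat (G.ball v r) (restrictAssign _ (Function.update g x (some v))) (G.ballCenter v r)

def GMLW.free {p : ℕ} : GMLW p → Set ℕ
  | .prop _ => ∅
  | .var x => {x}
  | .top => ∅
  | .and φ ψ => φ.free ∪ ψ.free
  | .not φ => φ.free
  | .dia _ φ => φ.free
  | .bindW x _ φ => φ.free \ {x}

def GMLW.Sentence {p : ℕ} (φ : GMLW p) : Prop := φ.free = ∅

/-- The nesting depth of `↓_{W^r}` operators. -/
def GMLW.bindDepth {p : ℕ} : GMLW p → ℕ
  | .prop _ => 0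
  | .var _ => 0
  | .top => 0
  | .and φ ψ => max φ.bindDepth ψ.bindDepth
  | .not φ => φ.bindDepth
  | .dia _ φ => φ.bindDepth
  | .bindW _ _ φ => φ.bindDepth + 1

/-- All `↓_{W}` operators in the formula use radius `r`. -/
def GMLW.radIs {p : ℕ} (r : ℕ) : GMLW p → Prop
  | .prop _ => True
  | .var _ => True
  | .top => True
  | .and φ ψ => φ.radIs r ∧ ψ.radIs r
  | .not φ => φ.radIs r
  | .dia _ φ => φ.radIs r
  | .bindW _ r' φ => r' = r ∧ φ.radIs r

noncomputable def GMLW.satS {p : ℕ} (G : LabGraph p) (φ : GMLW p) (v : G.V) : Prop :=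
  φ.sat G (fun _ => none) v
/-! ### Weisfeiler–Leman and Individualization-Refinement -/

/-- An (ordered) space of colors together with a perfect (injective) hash
function whose domains are: node labelings (initial colors), pairs of a color
and a multiset of colors (refinement), and pairs of a color and a marking
(individualization). -/
structure HashSetup (p : ℕ) : Type 1 where
  C : Type
  linC : LinearOrder C
  hInit : (Fin p → Prop) → C
  hRefine : C → Multiset C → C
  hIndiv : C → Prop → C
  inj : Function.Injective
    (Sum.elim hInit (Sum.elim (fun y : C × Multiset C => hRefine y.1 y.2)
      (fun y : C × Prop => hIndiv y.1 y.2)))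

/-- A coloring is discrete if all color classes are singletons. -/
def Discrete {V C : Type} (col : V → C) : Prop :=
  ∀ u w, col u = col w → u = w

/-- One round of color refinement. -/
noncomputable def wlStep {p : ℕ} (H : HashSetup p) (G : LabGraph p)
    (col : G.V → H.C) : G.V → H.C :=
  fun v => H.hRefine (col v) ((G.nbrFinset v).val.map col)

/-- `wlIter H G d col` = `WL(G, col, d)`. -/
noncomputable def wlIter {p : ℕ} (H : HashSetup p) (G : LabGraph p) :
    ℕ → (G.V → H.C) → (G.V → H.C)
  | 0, col => col
  | (d+1), col => wlStep H G (wlIter H G d col)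

/-- The initial coloring `col_G`. -/
noncomputable def initCol {p : ℕ} (H : HashSetup p) (G : LabGraph p) : G.V → H.C :=
  fun v => H.hInit (G.lab v)

/-- Rose trees labeled by multisets of colors.  (Children are kept in a list;
the isomorphism relation below disregards their order.) -/
inductive CTree (C : Type) : Type
  | node (label : Multiset C) (children : List (CTree C))

/-- Isomorphism of trees whose nodes are labeled by multisets of colors. -/
inductive CTree.Iso {C : Type} : CTree C → CTree C → Prop
  | node {l : Multiset C} {cs1 cs2 : List (CTree C)}
      (e : Fin cs1.length ≃ Fin cs2.length)
      (h : ∀ i : Fin cs1.length, CTree.Iso (cs1.get i) (cs2.get (e i))) :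
      CTree.Iso (.node l cs1) (.node l cs2)

/-- The multiset of all colors of a coloring. -/
noncomputable def colMultiset {p : ℕ} (H : HashSetup p) (G : LabGraph p)
    (col : G.V → H.C) : Multiset H.C :=
  Finset.univ.val.map col

/-- `WLIR H G d col` = the IR tree `WL-IR(G, col, d)` with at most `d`
individualization steps, with colorings recorded by their color multisets. -/
noncomputable def WLIR {p : ℕ} (H : HashSetup p) (G : LabGraph p) :
    ℕ → (G.V → H.C) → CTree H.C
  | 0, col => .node (colMultiset H G (wlIter H G (Fintype.card G.V) col)) []
  | (d+1), col =>
    let col' := wlIter H G (Fintype.card G.V) col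
    if hdisc : Discrete col' then .node (colMultiset H G col') []
    else
      letI := H.linC
      let bigs : Finset H.C := (Finset.univ.image col').filter
        (fun c => 1 < (Finset.univ.filter (fun v => col' v = c)).card)
      have hne : bigs.Nonempty := by
        simp only [Discrete, not_forall] at hdisc
        obtain ⟨u, w, hc, hne'⟩ := hdisc
        refine ⟨col' u, Finset.mem_filter.mpr
          ⟨Finset.mem_image_of_mem _ (Finset.mem_univ u), ?_⟩⟩
        exact Finset.one_lt_card.mpr
          ⟨u, by simp, w, by simp [hc.symm], hne'⟩
      let c := bigs.min' hne
      .node (colMultiset H G col')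
        (((Finset.univ.filter (fun v => col' v = c)).toList).map
          (fun vi => WLIR H G d (fun v => H.hIndiv (col' v) (v = vi))))

/-- `G ≡_{WL-IR-d} G'` : the IR trees with `d` individualization steps are
isomorphic. -/
noncomputable def WLIRequiv {p : ℕ} (H : HashSetup p) (G G' : LabGraph p) (d : ℕ) : Prop :=
  CTree.Iso (WLIR H G d (initCol H G)) (WLIR H G' d (initCol H G'))

/-- Isomorphism of labeled graphs. -/
def LabGraph.Iso {p : ℕ} (G G' : LabGraph p) : Prop :=
  ∃ f : G.V ≃ G'.V, (∀ u v, G.adj u v ↔ G'.adj (f u) (f v)) ∧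
    ∀ v i, G.lab v i ↔ G'.lab (f v) i
/-! ### The k-dimensional Weisfeiler–Leman test -/

/-- The type of `k`-WL colors after `i` refinement rounds (shared between all
graphs, so colors of different graphs are directly comparable). -/
def KColor (p k : ℕ) : ℕ → Type
  | 0 => ((Fin k → Fin k → Prop) × (Fin k → Fin k → Prop) × (Fin k → Fin p → Prop))
  | (i+1) => KColor p k i × (Fin k → Multiset (KColor p k i))

/-- The `k`-WL coloring of `k`-tuples after `i` rounds: the initial color is the
isomorphism type of the tuple (equalities, adjacencies, labels); each round
refines by, for each position, the multiset of colors of all one-point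
modifications of the tuple. -/
noncomputable def kwl (p k : ℕ) (G : LabGraph p) :
    (i : ℕ) → (Fin k → G.V) → KColor p k i
  | 0, t => (fun i j => t i = t j, fun i j => G.adj (t i) (t j), fun i a => G.lab (t i) a)
  | (i+1), t => (kwl p k G i t,
      fun j => Finset.univ.val.map (fun w => kwl p k G i (Function.update t j w)))

/-- `(G,v)` and `(G',v')` are *not* distinguished by the `k`-dimensional WL test:
the colors of the constant tuples `(v,…,v)` and `(v',…,v')` agree at every round
(equivalently, the stable colors agree). -/
noncomputable def kwlEquiv (p k : ℕ) (G : LabGraph p) (v : G.V) (G' : LabGraph p) (v' : G'.V) : Prop :=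
  ∀ i : ℕ, kwl p k G i (fun _ => v) = kwl p k G' i (fun _ => v')
/-! ### Rooted graphs, homomorphism counts, Sum/ReLU-FFNN GNNs, degree bounds -/

namespace LabGraph
variable {p : ℕ}

/-- `(F,u)` is a rooted graph: every node is reachable from `u`. -/
def Rooted (F : LabGraph p) (u : F.V) : Prop := ∀ w, ∃ r, F.within u r w

/-- Every node of `G` has degree at most `N`. -/
def degLe (G : LabGraph p) (N : ℕ) : Prop := ∀ v, Nat.card {u : G.V // G.adj v u} ≤ N

end LabGraph

/-- The number of homomorphisms from the pointed graph `(F,u)` to `(G,v)`: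
maps sending the root to `v`, preserving edges, and preserving labels. -/
noncomputable def homCount {p : ℕ} (F G : LabGraph p) (u : F.V) (v : G.V) : ℕ :=
  Nat.card {h : F.V → G.V //
    h u = v ∧ (∀ ⦃w w'⦄, F.adj w w' → G.adj (h w) (h w')) ∧
    ∀ w i, F.lab w i → G.lab (h w) i}

/-- Pointwise sum aggregation. -/
def sumAgg (D : ℕ) : Multiset (Fin D → ℝ) → (Fin D → ℝ) :=
  fun M i => (M.map (fun x => x i)).sum

/-- ReLU feed-forward neural networks: compositions of affine maps and
coordinatewise ReLU. -/
inductive IsReLUFFNN : {n m : ℕ} → ((Fin n → ℝ) → (Fin m → ℝ)) → Prop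
  | affine {n m : ℕ} (W : Matrix (Fin m) (Fin n) ℝ) (b : Fin m → ℝ) :
      IsReLUFFNN (fun x => W.mulVec x + b)
  | relu {n : ℕ} : IsReLUFFNN (fun (x : Fin n → ℝ) i => max 0 (x i))
  | comp {n m k : ℕ} {f : (Fin n → ℝ) → (Fin m → ℝ)} {g : (Fin m → ℝ) → (Fin k → ℝ)} :
      IsReLUFFNN f → IsReLUFFNN g → IsReLUFFNN (fun x => g (f x))

/-- A layer uses Sum aggregation and a ReLU-FFNN combination function. -/
def GNNLayer.SumReLU {Din Dout : ℕ} (l : GNNLayer Din Dout) : Prop :=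
  l.agg = sumAgg Din ∧ IsReLUFFNN l.com

def GNN.SumReLU : {D D' : ℕ} → GNN D D' → Prop
  | _, _, .last l => l.SumReLU
  | _, _, .cons l rest => l.SumReLU ∧ rest.SumReLU

def HEGNN.SumReLU : {d D D' : ℕ} → HEGNN d D D' → Prop
  | _, _, _, .base A => A.SumReLU
  | _, _, _, .nest B C => B.SumReLU ∧ C.SumReLU
/-! ### Cycles, acyclicity, ego-rank, tree-width -/

namespace LabGraph
variable {p : ℕ}

/-- There is a cycle (length ≥ 3, distinct nodes, consecutive nodes adjacent,
cyclically) all of whose nodes lie in `S`. -/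
def CycleIn (G : LabGraph p) (S : Set G.V) : Prop :=
  ∃ (n : ℕ) (c : Fin n → G.V), 3 ≤ n ∧ Function.Injective c ∧ (∀ i, c i ∈ S) ∧
    ∀ i : Fin n, G.adj (c i) (c ⟨(i.val + 1) % n, Nat.mod_lt _ i.pos⟩)

/-- `G` is acyclic. -/
def Acyclic (G : LabGraph p) : Prop := ¬ G.CycleIn Set.univ

/-- `(G,v)` is c-acyclic: every cycle of `G` passes through `v`. -/
def CAcyclic (G : LabGraph p) (v : G.V) : Prop :=
  ∀ (n : ℕ) (c : Fin n → G.V), 3 ≤ n → Function.Injective c →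
    (∀ i : Fin n, G.adj (c i) (c ⟨(i.val + 1) % n, Nat.mod_lt _ i.pos⟩)) →
    ∃ i, c i = v

/-- Reachability inside a set `S` (paths are required to stay in `S`). -/
inductive ReachIn (G : LabGraph p) (S : Set G.V) : G.V → G.V → Prop
  | refl {a} (ha : a ∈ S) : ReachIn G S a a
  | tail {a b c} : ReachIn G S a b → G.adj b c → c ∈ S → ReachIn G S a c

/-- The set `S` induces a connected subgraph. -/
def ConnectedIn (G : LabGraph p) (S : Set G.V) : Prop :=
  ∀ a ∈ S, ∀ b ∈ S, G.ReachIn S a b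

/-- `G` is connected. -/
def Connected (G : LabGraph p) : Prop := ∀ a b : G.V, ∃ r, G.within a r b

end LabGraph

/-! #### Ego-rank -/

/-- Transitive closure of a partial map `dep` (so `DepCl dep w x` means
`x ∈ deps(w) = {dep(w), dep(dep(w)), …} \ {⊥}`). -/
inductive DepCl {V : Type} (dep : V → Option V) : V → V → Prop
  | base {w x} : dep w = some x → DepCl dep w x
  | step {w x y} : DepCl dep w x → dep x = some y → DepCl dep w y

/-- `deps(w)` as a set. -/
def deps {V : Type} (dep : V → Option V) (w : V) : Set V := {x | DepCl dep w x}

/-- `dep` is a dependency function for the rooted graph `(G,v)`. -/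
def IsDepFun {p : ℕ} (G : LabGraph p) (v : G.V) (dep : G.V → Option G.V) : Prop :=
  dep v = none ∧
  (∀ {w u}, G.adj w u → dep w = dep u ∨ w ∈ deps dep u ∨ u ∈ deps dep w) ∧
  (∀ o : Option G.V, ¬ G.CycleIn {w | dep w = o})

/-- The node rank of a node: `|deps(w)|`. -/
noncomputable def nodeRank {V : Type} (dep : V → Option V) (w : V) : ℕ :=
  Nat.card {x // DepCl dep w x}

/-- Ego-rank: the smallest achievable maximum node rank over all dependency
functions. -/
noncomputable def egoRank {p : ℕ} (G : LabGraph p) (v : G.V) : ℕ :=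
  sInf {k | ∃ dep, IsDepFun G v dep ∧ ∀ w, nodeRank dep w ≤ k}

/-! #### Tree decompositions and tree-width -/

/-- A tree decomposition of `G`: a (connected, acyclic) tree `T` with bags
covering all nodes and edges, such that each node's bags form a connected
subtree. -/
structure TreeDecomp (p : ℕ) (G : LabGraph p) : Type 1 where
  T : LabGraph 0
  conn : T.Connected
  acyc : T.Acyclic
  bag : T.V → Set G.V
  cover_v : ∀ u : G.V, ∃ t, u ∈ bag t
  cover_e : ∀ {u w : G.V}, G.adj u w → ∃ t, u ∈ bag t ∧ w ∈ bag t
  subtree : ∀ u : G.V, T.ConnectedIn {t | u ∈ bag t}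

/-- Tree-width: minimum over tree decompositions of (maximum bag size − 1). -/
noncomputable def treewidth {p : ℕ} (G : LabGraph p) : ℕ :=
  sInf {w | ∃ D : TreeDecomp p G, ∀ t, Nat.card (D.bag t) ≤ w + 1}
/-! ### Special graphs: cycles, disjoint unions, grids (all labels empty) -/

/-- The cycle graph `C_n` (for `n ≥ 3`), with empty node labels. -/
def cycleGraph (p n : ℕ) : LabGraph p where
  V := Fin n
  fintypeV := inferInstance
  decEqV := inferInstance
  adj i j := i ≠ j ∧ ((i.val + 1) % n = j.val ∨ (j.val + 1) % n = i.val)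
  symm h := ⟨h.1.symm, h.2.symm⟩
  irrefl _ h := h.1 rfl
  lab _ _ := False

/-- Disjoint union of two graphs. -/
def LabGraph.disjUnion {p : ℕ} (G1 G2 : LabGraph p) : LabGraph p where
  V := G1.V ⊕ G2.V
  fintypeV := inferInstance
  decEqV := inferInstance
  adj a b :=
    match a, b with
    | .inl x, .inl y => G1.adj x y
    | .inr x, .inr y => G2.adj x y
    | _, _ => False
  symm {a b} h := by
    cases a <;> cases b <;> simp_all <;> first | exact G1.symm h | exact G2.symm h
  irrefl a h := by
    cases a
    · exact G1.irrefl _ h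
    · exact G2.irrefl _ h
  lab a i :=
    match a with
    | .inl x => G1.lab x i
    | .inr x => G2.lab x i

/-- The `n × 2` grid graph, with empty node labels. -/
def gridGraph (p n : ℕ) : LabGraph p where
  V := Fin n × Fin 2
  fintypeV := inferInstance
  decEqV := inferInstance
  adj a b := (a.2 = b.2 ∧ (a.1.val + 1 = b.1.val ∨ b.1.val + 1 = a.1.val)) ∨
    (a.1 = b.1 ∧ a.2 ≠ b.2)
  symm h := by
    rcases h with ⟨h1, h2⟩ | ⟨h1, h2⟩
    · exact Or.inl ⟨h1.symm, h2.symm⟩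
    · exact Or.inr ⟨h1.symm, h2.symm⟩
  irrefl a h := by
    rcases h with ⟨_, h2 | h2⟩ | ⟨_, h2⟩
    · omega
    · omega
    · exact h2 rfl
  lab _ _ := False
/-! ### The witness graphs of Rattan–Seppelt: a central 4-cycle with attached
triangles and 6-cycles. -/

/-- Vertex type: 4 square nodes, 4 triangles (3 nodes each), 4 hexagons
(6 nodes each). -/
abbrev RSV : Type := Fin 4 ⊕ (Fin 4 × Fin 3) ⊕ (Fin 4 × Fin 6)

/-- Adjacency, parameterized by the owner (square corner) of each triangle and
of each hexagon: the square is a 4-cycle; each triangle/hexagon is complete to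
its owner; triangles are 3-cycles, hexagons are 6-cycles. -/
def rsAdj (tO hO : Fin 4 → Fin 4) : RSV → RSV → Prop
  | .inl a, .inl b => a ≠ b ∧ ((a.val + 1) % 4 = b.val ∨ (b.val + 1) % 4 = a.val)
  | .inl a, .inr (.inl (t, _)) => a = tO t
  | .inr (.inl (t, _)), .inl a => a = tO t
  | .inl a, .inr (.inr (s, _)) => a = hO s
  | .inr (.inr (s, _)), .inl a => a = hO s
  | .inr (.inl (t, i)), .inr (.inl (t', i')) => t = t' ∧ i ≠ i'
  | .inr (.inr (s, j)), .inr (.inr (s', j')) =>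
      s = s' ∧ ((j.val + 1) % 6 = j'.val ∨ (j'.val + 1) % 6 = j.val)
  | _, _ => False

def rsGraph (p : ℕ) (tO hO : Fin 4 → Fin 4) : LabGraph p where
  V := RSV
  fintypeV := inferInstance
  decEqV := inferInstance
  adj := rsAdj tO hO
  symm {u v} h := by
    rcases u with a | ⟨t, i⟩ | ⟨s, j⟩ <;> rcases v with b | ⟨t', i'⟩ | ⟨s', j'⟩ <;>
      simp only [rsAdj] at h ⊢ <;> tauto
  irrefl u h := by
    rcases u with a | ⟨t, i⟩ | ⟨s, j⟩ <;> simp only [rsAdj] at h <;> omega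
  lab _ _ := False

/-- `G`: triangles attached to `u₁` (index 0) and `u₄` (index 3), hexagons to
`u₂` (index 1) and `u₃` (index 2). -/
def rsG (p : ℕ) : LabGraph p :=
  rsGraph p (fun t => if t.val < 2 then 0 else 3) (fun s => if s.val < 2 then 1 else 2)

/-- `G'`: triangles attached to the opposite corners `u₁` (index 0) and `u₃`
(index 2), hexagons to `u₂` (index 1) and `u₄` (index 3). -/
def rsG' (p : ℕ) : LabGraph p :=
  rsGraph p (fun t => if t.val < 2 then 0 else 2) (fun s => if s.val < 2 then 1 else 3)
/-! ### LabGraph-level separation by node classifiers -/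

/-- `G ≡_{GNN} G'`: for every GNN node classifier, the multisets of classifier
values over all nodes coincide. -/
noncomputable def gnnGraphEquiv (p : ℕ) (G G' : LabGraph p) : Prop :=
  ∀ A : GNN p 1, Finset.univ.val.map (A.cls G) = Finset.univ.val.map (A.cls G')

/-- `G ≡_{HE-GNN-(d)} G'`: for every HE-GNN node classifier of nesting depth
`d`, the multisets of classifier values over all nodes coincide. -/
noncomputable def hegnnGraphEquiv (p d : ℕ) (G G' : LabGraph p) : Prop :=
  ∀ A : HEGNN d p 1, Finset.univ.val.map (A.cls G) = Finset.univ.val.map (A.cls G')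

/-- The eccentricity of `u` in `G`: the maximal distance from `u` to any node. -/
noncomputable def LabGraph.eccFrom {p : ℕ} (G : LabGraph p) (u : G.V) : ℕ :=
  Finset.univ.sup (fun w => sInf {r | G.within u r w})

/-!
If `(F, u)` is a tree, the homomorphism counts of its subtrees satisfy
`hom((F_w, w), (G, v)) = [lab w ⊆ lab v] * ∏_{c child of w} ∑_{v' ~ v} hom((F_c, c), (G, v'))`.
Message passing in which every node of `G` keeps the current counts for all subtrees of all
patterns therefore makes the count of a subtree of height `h` exact after `h + 1` rounds, and
reads off `hom((F, u), (G, v))` at the root. A GNN with arbitrary aggregation and combination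
functions runs any message passing with countable states, by coding a state as one real number.
-/

/-- A rooted forest given by its parent map; the roots are the nodes of depth `0`, and the
parent of a root is again a root. -/
structure RootedForest (V : Type*) where
  par : V → V
  depth : V → ℕ
  depth_par : ∀ x, depth (par x) = depth x - 1

namespace RootedForest

variable {V : Type*} (T : RootedForest V)

def IsDesc (w x : V) : Prop := T.par^[T.depth x - T.depth w] x = w

/-- The child of `w` on the way from `w` down to its descendant `x`. -/
def branch (w x : V) : V := T.par^[T.depth x - (T.depth w + 1)] x

noncomputable def children [Fintype V] (w : V) : Finset V :=
  Finset.univ.filter fun c => T.par c = w ∧ T.depth c = T.depth w + 1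

variable {T} {w x c : V}

lemma depth_iterate_par (k : ℕ) (x : V) : T.depth (T.par^[k] x) = T.depth x - k := by
  induction k with
  | zero => rfl
  | succ k ih => rw [Function.iterate_succ_apply', T.depth_par, ih]; omega

lemma isDesc_refl (w : V) : T.IsDesc w w := by simp [IsDesc]

lemma isDesc_of_forall_depth_eq_zero_iff (hw : ∀ y, T.depth y = 0 ↔ y = w) (x : V) :
    T.IsDesc w x := by
  rw [IsDesc, (hw w).mpr rfl, ← hw, depth_iterate_par]
  omega

lemma IsDesc.depth_le (h : T.IsDesc w x) : T.depth w ≤ T.depth x := by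
  have := congrArg T.depth h
  rw [depth_iterate_par] at this
  omega

lemma IsDesc.depth_lt (h : T.IsDesc w x) (hne : x ≠ w) : T.depth w < T.depth x := by
  by_contra hle
  exact hne (by simpa [IsDesc, show T.depth x - T.depth w = 0 by omega] using h)

lemma mem_children [Fintype V] : c ∈ T.children w ↔ T.par c = w ∧ T.depth c = T.depth w + 1 := by
  simp [children]

lemma branch_mem_children [Fintype V] (h : T.IsDesc w x) (hne : x ≠ w) :
    T.branch w x ∈ T.children w := by
  have hlt := h.depth_lt hne
  refine mem_children.mpr ⟨?_, ?_⟩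
  · calc T.par (T.branch w x) = T.par^[T.depth x - T.depth w] x := by
          rw [branch, ← Function.iterate_succ_apply' T.par]
          congr 1
          omega
      _ = w := h
  · rw [branch, depth_iterate_par]
    omega

lemma isDesc_branch (h : T.IsDesc w x) (hne : x ≠ w) : T.IsDesc (T.branch w x) x := by
  have hlt := h.depth_lt hne
  rw [IsDesc, branch, depth_iterate_par, show T.depth x - (T.depth x - (T.depth w + 1)) =
    T.depth w + 1 by omega]

lemma branch_eq_of_mem_children [Fintype V] (hc : c ∈ T.children w) (h : T.IsDesc c x) :
    T.branch w x = c := by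
  rw [branch, ← (mem_children.mp hc).2]
  exact h

lemma IsDesc.of_mem_children [Fintype V] (hc : c ∈ T.children w) (h : T.IsDesc c x) :
    T.IsDesc w x := by
  obtain ⟨hpar, hdepth⟩ := mem_children.mp hc
  have hle := h.depth_le
  rw [IsDesc, show T.depth x - T.depth w = (T.depth x - T.depth c) + 1 by omega,
    Function.iterate_succ_apply', h, hpar]

lemma IsDesc.ne_of_mem_children [Fintype V] (hc : c ∈ T.children w) (h : T.IsDesc c x) :
    x ≠ w := by
  rintro rfl
  have := h.depth_le
  have := (mem_children.mp hc).2
  omega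

lemma IsDesc.par (h : T.IsDesc c x) (hne : x ≠ c) : T.IsDesc c (T.par x) := by
  have hlt := h.depth_lt hne
  rw [IsDesc, T.depth_par, ← Function.iterate_succ_apply,
    show (T.depth x - 1 - T.depth c).succ = T.depth x - T.depth c by omega]
  exact h

section SubtreeHoms

variable {Y : Type*} [Fintype V] (T) (ok : V → Y → Prop) (adj : Y → Y → Prop)

/-- Maps are normalised to be constant off the subtree below `w`, so that maps on all of `V`
stand for maps on that subtree. -/
def IsSubtreeHom (w : V) (h : V → Y) : Prop :=
  (∀ x, T.IsDesc w x → ok x (h x)) ∧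
  (∀ x, T.IsDesc w x → x ≠ w → adj (h (T.par x)) (h x)) ∧
  ∀ x, ¬ T.IsDesc w x → h x = h w

noncomputable def subtreeHoms [DecidableEq V] [Fintype Y] [DecidableEq Y] (w : V) (y : Y) :
    Finset (V → Y) :=
  Finset.univ.filter fun h => h w = y ∧ T.IsSubtreeHom ok adj w h

noncomputable def restrictBelow (c : V) (h : V → Y) : V → Y :=
  fun x => if T.IsDesc c x then h x else h c

noncomputable def graft (w : V) (y : Y) (g : T.children w → V → Y) : V → Y := fun x =>
  if hx : T.IsDesc w x ∧ x ≠ w then g ⟨T.branch w x, branch_mem_children hx.1 hx.2⟩ x else y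

variable {T ok adj} {y : Y}

lemma graft_apply_of_isDesc {g : T.children w → V → Y} (hc : c ∈ T.children w) {x : V}
    (hx : T.IsDesc c x) : T.graft w y g x = g ⟨c, hc⟩ x := by
  rw [graft, dif_pos ⟨hx.of_mem_children hc, hx.ne_of_mem_children hc⟩]
  congr
  exact branch_eq_of_mem_children hc hx

lemma restrictBelow_isSubtreeHom {h : V → Y} (hh : T.IsSubtreeHom ok adj w h)
    (hc : c ∈ T.children w) :
    adj (h w) (T.restrictBelow c h c) ∧ T.IsSubtreeHom ok adj c (T.restrictBelow c h) := by
  obtain ⟨hok, hadj, -⟩ := hh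
  have hrc : T.restrictBelow c h c = h c := if_pos (isDesc_refl c)
  refine ⟨?_, fun x hx => ?_, fun x hx => ?_, fun x hx => ?_⟩
  · rw [hrc, ← (mem_children.mp hc).1]
    exact hadj c (isDesc_refl c |>.of_mem_children hc) (isDesc_refl c |>.ne_of_mem_children hc)
  · rw [restrictBelow, if_pos hx]
    exact hok x (hx.of_mem_children hc)
  · intro hne
    rw [restrictBelow, restrictBelow, if_pos hx, if_pos (hx.par hne)]
    exact hadj x (hx.of_mem_children hc) (hx.ne_of_mem_children hc)
  · rw [hrc, restrictBelow, if_neg hx]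

lemma graft_isSubtreeHom (hy : ok w y) {g : T.children w → V → Y}
    (hg : ∀ c, adj y (g c c) ∧ T.IsSubtreeHom ok adj c (g c)) :
    T.graft w y g w = y ∧ T.IsSubtreeHom ok adj w (T.graft w y g) := by
  have hw : T.graft w y g w = y := dif_neg fun hx => hx.2 rfl
  refine ⟨hw, fun x hx => ?_, fun x hx hne => ?_, fun x hx => ?_⟩
  · by_cases hne : x = w
    · rwa [hne, hw]
    · have hb := branch_mem_children hx hne
      rw [graft_apply_of_isDesc hb (isDesc_branch hx hne)]
      exact (hg _).2.1 x (isDesc_branch hx hne)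
  · have hb := branch_mem_children hx hne
    have hxb := isDesc_branch hx hne
    rw [graft_apply_of_isDesc hb hxb]
    by_cases hxc : x = T.branch w x
    · rw [show T.par x = w by rw [hxc]; exact (mem_children.mp hb).1, hw]
      convert (hg ⟨_, hb⟩).1 using 2
    · rw [graft_apply_of_isDesc hb (hxb.par hxc)]
      exact (hg _).2.2.1 x hxb hxc
  · rw [hw, graft, dif_neg fun h => hx h.1]

lemma graft_restrictBelow {h : V → Y} (hw : h w = y) (hh : T.IsSubtreeHom ok adj w h) :
    T.graft w y (fun c => T.restrictBelow c h) = h := by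
  funext x
  by_cases hx : T.IsDesc w x ∧ x ≠ w
  · rw [graft, dif_pos hx, restrictBelow, if_pos (isDesc_branch hx.1 hx.2)]
  · rw [graft, dif_neg hx]
    by_cases hdesc : T.IsDesc w x
    · rw [show x = w by tauto, hw]
    · rw [hh.2.2 x hdesc, hw]

lemma restrictBelow_graft {g : T.children w → V → Y}
    (hg : ∀ c : T.children w, T.IsSubtreeHom ok adj c (g c)) (c : T.children w) :
    T.restrictBelow c (T.graft w y g) = g c := by
  funext x
  have hcc : T.graft w y g c = g c c := graft_apply_of_isDesc c.2 (isDesc_refl _)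
  by_cases hx : T.IsDesc c x
  · rw [restrictBelow, if_pos hx, graft_apply_of_isDesc c.2 hx]
  · rw [restrictBelow, if_neg hx, hcc, (hg c).2.2 x hx]

lemma card_subtreeHoms_eq_prod [DecidableEq V] [Fintype Y] [DecidableEq Y] (hy : ok w y) :
    (T.subtreeHoms ok adj w y).card = ∏ c ∈ T.children w,
      (Finset.univ.filter fun g => adj y (g c) ∧ T.IsSubtreeHom ok adj c g).card := by
  rw [← Finset.prod_coe_sort, ← Fintype.card_piFinset]
  refine Finset.card_nbij' (fun h c => T.restrictBelow c h) (T.graft w y) ?_ ?_ ?_ ?_ <;>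
    intro h hh <;>
    simp only [Finset.mem_coe, Fintype.mem_piFinset, subtreeHoms, Finset.mem_filter,
      Finset.mem_univ, true_and] at hh ⊢
  · intro c
    rw [← hh.1]
    exact restrictBelow_isSubtreeHom hh.2 c.2
  · exact graft_isSubtreeHom hy hh
  · exact graft_restrictBelow hh.1 hh.2
  · funext c
    exact restrictBelow_graft (fun c => (hh c).2) c

variable (T ok adj) [DecidableEq V] [Fintype Y] [DecidableEq Y]

lemma card_subtreeHoms :
    (T.subtreeHoms ok adj w y).card = if ok w y then
      ∏ c ∈ T.children w, ∑ y' ∈ Finset.univ.filter (adj y), (T.subtreeHoms ok adj c y').card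
    else 0 := by
  split_ifs with hy
  · rw [card_subtreeHoms_eq_prod hy]
    refine Finset.prod_congr rfl fun c _ => ?_
    rw [Finset.card_eq_sum_card_fiberwise (f := fun g => g c) (t := Finset.univ.filter (adj y))
      fun g hg => by simp_all]
    refine Finset.sum_congr rfl fun y' hy' => ?_
    rw [subtreeHoms, Finset.filter_filter]
    refine congrArg Finset.card (Finset.filter_congr fun g _ => ?_)
    simp only [Finset.mem_filter, Finset.mem_univ, true_and] at hy'
    constructor
    · rintro ⟨⟨-, hg⟩, rfl⟩
      exact ⟨rfl, hg⟩
    · rintro ⟨rfl, hg⟩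
      exact ⟨⟨hy', hg⟩, rfl⟩
  · refine Finset.card_eq_zero.mpr (Finset.filter_eq_empty_iff.mpr fun h _ hh => hy ?_)
    rw [← hh.1]
    exact hh.2.1 w (isDesc_refl w)

noncomputable def countDP : ℕ → V → Y → ℕ
  | 0, _, _ => 0
  | k + 1, w, y => if ok w y then
      ∏ c ∈ T.children w, ∑ y' ∈ Finset.univ.filter (adj y), countDP k c y'
    else 0

variable {T ok adj}

theorem countDP_eq_card {k : ℕ} {w : V} (hk : ∀ x, T.IsDesc w x → T.depth x < T.depth w + k)
    (y : Y) : T.countDP ok adj k w y = (T.subtreeHoms ok adj w y).card := by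
  induction k generalizing w y with
  | zero => exact absurd (hk w (isDesc_refl w)) (by omega)
  | succ k ih =>
    rw [countDP, card_subtreeHoms]
    split_ifs
    · refine Finset.prod_congr rfl fun c hc =>
        Finset.sum_congr rfl fun y' _ => ih (fun x hx => ?_) y'
      have := hk x (hx.of_mem_children hc)
      have := (mem_children.mp hc).2
      omega
    · rfl

end SubtreeHoms

end RootedForest

namespace SimpleGraph.IsAcyclic

variable {V : Type*} {G : SimpleGraph V} (hG : G.IsAcyclic) {u : V} {P : ∀ w, G.Walk u w}
  (hP : ∀ w, (P w).IsPath)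
include hG hP

lemma length_penultimate (w : V) : (P (P w).penultimate).length = (P w).length - 1 := by
  have := (hG.subsingleton_path u _).elim ⟨_, hP _⟩ ⟨(P w).dropLast, (hP w).dropLast⟩
  rw [← Walk.length_dropLast]
  exact congrArg (fun q => q.1.length) this

lemma adj_iff_penultimate_eq {a b : V} :
    G.Adj a b ↔ (a ≠ u ∧ (P a).penultimate = b) ∨ (b ≠ u ∧ (P b).penultimate = a) := by
  have penultimate_ne {x y : V} (hxy : G.Adj x y) (h : (P x).penultimate = y) : x ≠ u := by
    rintro rfl
    rw [(Walk.isPath_iff_nil.mp (hP x)).eq_nil, Walk.penultimate_nil] at h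
    exact hxy.ne h
  constructor
  · intro hab
    by_cases ha : a ∈ (P b).support
    · have h := (hG.eq_penultimate_of_adj_end (hP b) hab.symm ha).symm
      exact Or.inr ⟨penultimate_ne hab.symm h, h⟩
    · have h := (hG.eq_penultimate_of_adj_end (hP a) hab
        (hG.mem_support_of_ne_mem_support_of_adj_of_isPath (hP a) (hP b) hab ha)).symm
      exact Or.inl ⟨penultimate_ne hab h, h⟩
  · rintro (⟨ha, rfl⟩ | ⟨hb, rfl⟩)
    · exact (Walk.adj_penultimate fun h => ha h.eq.symm).symm
    · exact Walk.adj_penultimate fun h => hb h.eq.symm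

end SimpleGraph.IsAcyclic

namespace LabGraph

variable {p : ℕ}

def toSimpleGraph (F : LabGraph p) : SimpleGraph F.V where
  Adj := F.adj
  symm := ⟨fun _ _ h => F.symm h⟩
  loopless := ⟨F.irrefl⟩

variable {F : LabGraph p}

lemma Acyclic.isAcyclic_toSimpleGraph (h : F.Acyclic) : F.toSimpleGraph.IsAcyclic := by
  refine SimpleGraph.isAcyclic_iff_free_cycleGraph.mpr fun n hn ⟨f⟩ => h ?_
  obtain ⟨k, rfl⟩ : ∃ k, n = k + 2 := ⟨n - 2, by omega⟩
  refine ⟨k + 2, f, hn, f.injective, fun _ => trivial, fun i => f.toHom.map_adj ?_⟩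
  refine SimpleGraph.cycleGraph_adj.mpr (Or.inr (sub_eq_iff_eq_add'.mpr (Fin.ext ?_)))
  simp [Fin.val_add]

lemma Rooted.reachable {u : F.V} (h : F.Rooted u) (w : F.V) : F.toSimpleGraph.Reachable u w := by
  obtain ⟨r, hr⟩ := h w
  induction r generalizing w with
  | zero => cases hr; rfl
  | succ r ih =>
    rcases hr with hr | ⟨x, hx, hxw⟩
    · exact ih w hr
    · exact (ih x hx).trans (SimpleGraph.Adj.reachable hxw)

end LabGraph

structure RootedForest.IsTreeOf {p : ℕ} {F : LabGraph p} (T : RootedForest F.V) (u : F.V) :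
    Prop where
  depth_eq_zero_iff : ∀ x, T.depth x = 0 ↔ x = u
  adj_iff : ∀ a b, F.adj a b ↔ (a ≠ u ∧ T.par a = b) ∨ (b ≠ u ∧ T.par b = a)

theorem LabGraph.exists_isTreeOf {p : ℕ} {F : LabGraph p} {u : F.V} (hroot : F.Rooted u)
    (hacyc : F.Acyclic) : ∃ T : RootedForest F.V, T.IsTreeOf u := by
  choose P hP using fun w =>
    (⟨_, (hroot.reachable w).some.bypass_isPath⟩ : ∃ q : F.toSimpleGraph.Walk u w, q.IsPath)
  refine ⟨⟨fun w => (P w).penultimate, fun w => (P w).length,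
    hacyc.isAcyclic_toSimpleGraph.length_penultimate hP⟩, ⟨fun x => ?_,
    fun a b => hacyc.isAcyclic_toSimpleGraph.adj_iff_penultimate_eq hP⟩⟩
  refine ⟨fun h => (SimpleGraph.Walk.eq_of_length_eq_zero h).symm, ?_⟩
  rintro rfl
  exact SimpleGraph.Walk.length_eq_zero_iff.mpr (SimpleGraph.Walk.isPath_iff_nil.mp (hP _))

section TreeHomCount

variable {p : ℕ} {F G : LabGraph p} {u : F.V} {T : RootedForest F.V}

lemma RootedForest.IsTreeOf.forall_adj_iff (hT : T.IsTreeOf u) (h : F.V → G.V) :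
    (∀ ⦃a b⦄, F.adj a b → G.adj (h a) (h b)) ↔ ∀ x, x ≠ u → G.adj (h (T.par x)) (h x) := by
  refine ⟨fun hh x hx => hh ((hT.adj_iff _ _).mpr (Or.inr ⟨hx, rfl⟩)), fun hh a b hab => ?_⟩
  rcases (hT.adj_iff a b).mp hab with ⟨ha, rfl⟩ | ⟨hb, rfl⟩
  · exact G.symm (hh a ha)
  · exact hh b hb

theorem RootedForest.IsTreeOf.homCount_eq_card_subtreeHoms (hT : T.IsTreeOf u) (v : G.V) :
    homCount F G u v =
      (T.subtreeHoms (fun w y => ∀ j, F.lab w j → G.lab y j) G.adj u v).card := by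
  rw [homCount, Nat.card_eq_fintype_card, Fintype.card_subtype, RootedForest.subtreeHoms]
  refine congrArg Finset.card (Finset.filter_congr fun h _ => and_congr_right fun _ => ?_)
  have hdesc := T.isDesc_of_forall_depth_eq_zero_iff hT.depth_eq_zero_iff
  simp only [RootedForest.IsSubtreeHom, hdesc, forall_const, not_true_eq_false, false_implies,
    implies_true, and_true, hT.forall_adj_iff]
  exact and_comm

end TreeHomCount

noncomputable def LabGraph.passMessages {p : ℕ} {S : Type*} (G : LabGraph p)
    (step : S → Multiset S → S) (s : G.V → S) : G.V → S :=
  fun v => step (s v) ((G.nbrFinset v).val.map s)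

lemma Countable.exists_injective_real (α : Type*) [Countable α] :
    ∃ f : α → ℝ, Function.Injective f :=
  let ⟨f, hf⟩ := Countable.exists_injective_nat α
  ⟨fun a => (f a : ℝ), Nat.cast_injective.comp hf⟩

section Simulation

variable {S : Type*} (enc : S → ℝ) (encM : Multiset S → ℝ)

noncomputable def GNNLayer.initLayer {D : ℕ} (init : (Fin D → ℝ) → S) : GNNLayer D 1 where
  agg _ := 0
  com x _ := enc (init fun j => x (Fin.castAdd D j))

lemma GNNLayer.initLayer_apply {p D : ℕ} (G : LabGraph p) (init : (Fin D → ℝ) → S)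
    (emb : G.V → Fin D → ℝ) :
    (GNNLayer.initLayer enc init).apply G emb = fun v _ => enc (init (emb v)) := by
  funext v _
  simp only [GNNLayer.apply, GNNLayer.initLayer, Fin.append_left]

variable [Nonempty S]

noncomputable def GNNLayer.stepLayer (step : S → Multiset S → S) : GNNLayer 1 1 where
  agg M _ := encM (M.map fun t => Function.invFun enc (t 0))
  com x _ := enc (step (Function.invFun enc (x (Fin.castAdd 1 0)))
    (Function.invFun encM (x (Fin.natAdd 1 0))))

noncomputable def GNNLayer.outLayer {D' : ℕ} (out : S → Fin D' → ℝ) : GNNLayer 1 D' where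
  agg _ := 0
  com x := out (Function.invFun enc (x (Fin.castAdd 1 0)))

noncomputable def GNN.stepsThenOut {D' : ℕ} (step : S → Multiset S → S)
    (out : S → Fin D' → ℝ) : ℕ → GNN 1 D'
  | 0 => .last (GNNLayer.outLayer enc out)
  | n + 1 => .cons (GNNLayer.stepLayer enc encM step) (GNN.stepsThenOut step out n)

variable {enc encM} (henc : Function.Injective enc) (hencM : Function.Injective encM)
  {p : ℕ} (G : LabGraph p)
include henc hencM

lemma GNNLayer.stepLayer_apply (step : S → Multiset S → S)
    (s : G.V → S) :
    (GNNLayer.stepLayer enc encM step).apply G (fun v _ => enc (s v)) =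
      fun v _ => enc (G.passMessages step s v) := by
  funext v _
  simp only [GNNLayer.apply, GNNLayer.stepLayer, Fin.append_left, Fin.append_right,
    Multiset.map_map, Function.comp_def, Function.leftInverse_invFun henc _,
    Function.leftInverse_invFun hencM _, LabGraph.passMessages]

lemma GNN.stepsThenOut_run {D' : ℕ} (step : S → Multiset S → S) (out : S → Fin D' → ℝ) (n : ℕ)
    (s : G.V → S) :
    (GNN.stepsThenOut enc encM step out n).run G (fun v _ => enc (s v)) =
      fun v => out ((G.passMessages step)^[n] s v) := by
  induction n generalizing s with
  | zero =>
    funext v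
    simp only [GNN.stepsThenOut, GNN.run, GNNLayer.apply, GNNLayer.outLayer, Fin.append_left,
      Function.leftInverse_invFun henc _, Function.iterate_zero, id]
  | succ n ih =>
    rw [GNN.stepsThenOut, GNN.run, GNNLayer.stepLayer_apply henc hencM G, ih,
      Function.iterate_succ]
    rfl

end Simulation

/-- The state of a node is carried by a single real through an injective code, which the
unrestricted combination functions decode. -/
theorem GNN.exists_run_eq_passMessages {S : Type*} [Countable S] {D D' : ℕ}
    (init : (Fin D → ℝ) → S) (step : S → Multiset S → S) (out : S → Fin D' → ℝ) (n : ℕ) :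
    ∃ A : GNN D D', ∀ {p : ℕ} (G : LabGraph p) (emb : G.V → Fin D → ℝ) (v : G.V),
      A.run G emb v = out ((G.passMessages step)^[n] (fun w => init (emb w)) v) := by
  have : Nonempty S := ⟨init 0⟩
  obtain ⟨enc, henc⟩ := Countable.exists_injective_real S
  obtain ⟨encM, hencM⟩ := Countable.exists_injective_real (Multiset S)
  refine ⟨.cons (GNNLayer.initLayer enc init) (GNN.stepsThenOut enc encM step out n),
    fun G emb v => ?_⟩
  rw [GNN.run, GNNLayer.initLayer_apply, GNN.stepsThenOut_run henc hencM G]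

lemma LabGraph.embG_eq_one_iff {p : ℕ} {G : LabGraph p} {v : G.V} {j : Fin p} :
    G.embG v j = 1 ↔ G.lab v j := by
  by_cases h : G.lab v j <;> simp [LabGraph.embG, h]

section HomCountGNN

variable {p m : ℕ} (F : Fin m → LabGraph p) (T : ∀ i, RootedForest (F i).V)

/-- Node labels, and for every pattern `F i` and node `w` a subtree homomorphism count. -/
abbrev HomCountState : Type := (Fin p → Prop) × (∀ i, (F i).V → ℕ)

noncomputable def homCountStep (s : HomCountState F) (N : Multiset (HomCountState F)) :
    HomCountState F :=
  (s.1, fun i w => if ∀ j, (F i).lab w j → s.1 j then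
    ∏ c ∈ (T i).children w, (N.map fun t => t.2 i c).sum else 0)

lemma passMessages_homCountStep_iterate (G : LabGraph p) (k : ℕ) :
    (G.passMessages (homCountStep F T))^[k] (fun v => (G.lab v, 0)) = fun v =>
      (G.lab v, fun i w =>
        (T i).countDP (fun w y => ∀ j, (F i).lab w j → G.lab y j) G.adj k w v) := by
  induction k with
  | zero => rfl
  | succ k ih =>
    rw [Function.iterate_succ_apply', ih]
    funext v
    simp only [LabGraph.passMessages, homCountStep, Multiset.map_map, Function.comp_def,
      RootedForest.countDP]
    refine Prod.ext rfl (funext₂ fun i w => ?_)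
    dsimp only
    -- the two conditions carry different `Decidable` instances
    split_ifs <;> rfl

end HomCountGNN

/-- For any finite set `𝔉` of acyclic rooted graphs there is a
`(|P|, |P|+|𝔉|)`-GNN computing `emb_G(v) ⊕ hom(𝔉,(G,v))` at every node of every
pointed graph. -/
theorem gnn_hom_counts_acyclic (p m : ℕ) (F : Fin m → LabGraph p)
    (u : ∀ i, (F i).V) (hroot : ∀ i, (F i).Rooted (u i))
    (hacyc : ∀ i, (F i).Acyclic) :
    ∃ A : GNN p (p + m),
      ∀ (G : LabGraph p) (v : G.V),
        A.run G G.embG v =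
          Fin.append (G.embG v) (fun i => (homCount (F i) G (u i) v : ℝ)) := by
  choose T hT using fun i => LabGraph.exists_isTreeOf (hroot i) (hacyc i)
  set K := Finset.univ.sup fun i => Finset.univ.sup (T i).depth
  have hK (i : Fin m) (x : (F i).V) : (T i).depth x ≤ K :=
    (Finset.le_sup (Finset.mem_univ x)).trans
      (Finset.le_sup (f := fun i => Finset.univ.sup (T i).depth) (Finset.mem_univ i))
  obtain ⟨A, hA⟩ := GNN.exists_run_eq_passMessages
    (fun x => ((fun j => x j = 1), 0) : (Fin p → ℝ) → HomCountState F) (homCountStep F T)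
    (fun s => Fin.append (fun j => if s.1 j then 1 else 0) fun i => (s.2 i (u i) : ℝ)) (K + 1)
  refine ⟨A, fun G v => ?_⟩
  have hinit : (fun w => ((fun j => G.embG w j = 1), 0) : G.V → HomCountState F) =
      fun w => (G.lab w, 0) := by
    simp only [LabGraph.embG_eq_one_iff]
  rw [hA, hinit, passMessages_homCountStep_iterate]
  congr 1
  funext i
  dsimp only
  rw [RootedForest.countDP_eq_card fun x _ => by
      rw [((hT i).depth_eq_zero_iff _).mpr rfl]; linarith [hK i x],
    (hT i).homCount_eq_card_subtreeHoms]
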